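/- arXiv:2505.02864 — 4 statements merged into one kernel-verified Lean document; each statement's English description precedes it below -/
import Mathlib

section
/- Let N ≥ 1, let a > 0, let p : Fin N → ℝ with p(n) ≥ 0 for all n, let c : Fin N → ℝ with c(n) > 0 for all n, and let σ, τ be permutations of Fin N such that c ∘ τ is antitone. For a permutation ρ define the rate at position n as R_ρ(n) = log₂(1 + a·p(n)/(a·∑_{j>n} p(j) + max_{i≥n} c(ρ(i)))), the maximum taken over positions i with n ≤ i. Then for every position n, R_σ(n) ≤ R_τ(n), and moreover R_τ(n) = log₂(1 + a·p(n)/(a·∑_{j>n} p(j) + c(τ(n)))). -/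
/-- The achievable rate at decoding position `n` under decoding order `ρ`:
`log₂ (1 + a p n / (a ∑_{j>n} p j + max_{i ≥ n} c (ρ i)))`. -/
noncomputable def sicRate {N : ℕ} (a : ℝ) (p c : Fin N → ℝ)
    (ρ : Equiv.Perm (Fin N)) (n : Fin N) : ℝ :=
  Real.logb 2 (1 + a * p n /
    (a * ∑ j ∈ Finset.Ioi n, p j +
      (Finset.Ici n).sup' ⟨n, Finset.mem_Ici.mpr le_rfl⟩ (fun i => c (ρ i))))

/-!
Under the sorted order `τ` the tail maximum `max_{i ≥ n} c (τ i)` is just `c (τ n)`. For any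
other order `σ`, the `N - n` positions `i ≥ n` cannot all be sent by `τ⁻¹ σ` into the `N - n - 1`
positions above `n`, so some `i ≥ n` has `σ i = τ m` with `m ≤ n`, whence
`c (σ i) = c (τ m) ≥ c (τ n)`. A larger interference term can only lower the rate.
-/

theorem Antitone.sup'_Ici_eq {α β : Type*} [Preorder α] [LocallyFiniteOrderTop α]
    [SemilatticeSup β] {f : α → β} (hf : Antitone f) (a : α) (h : (Finset.Ici a).Nonempty) :
    (Finset.Ici a).sup' h f = f a :=
  le_antisymm (Finset.sup'_le _ _ fun _ hb => hf (Finset.mem_Ici.mp hb))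
    (Finset.le_sup' f (Finset.mem_Ici.mpr le_rfl))

theorem Equiv.Perm.exists_le_apply_le {N : ℕ} (π : Equiv.Perm (Fin N)) (n : Fin N) :
    ∃ i, n ≤ i ∧ π i ≤ n := by
  by_contra! h
  have hcard := Finset.card_le_card_of_injOn π
    (fun i hi => Finset.mem_Ioi.mpr (h i (Finset.mem_Ici.mp hi))) π.injective.injOn
  simp only [Fin.card_Ici, Fin.card_Ioi] at hcard
  omega

theorem apply_le_sup'_Ici_of_antitone_comp {N : ℕ} {β : Type*} [SemilatticeSup β]
    {c : Fin N → β} (σ τ : Equiv.Perm (Fin N)) (hτ : Antitone (c ∘ τ)) (n : Fin N) :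
    c (τ n) ≤ (Finset.Ici n).sup' ⟨n, Finset.mem_Ici.mpr le_rfl⟩ (fun i => c (σ i)) := by
  obtain ⟨i, hni, hin⟩ := (τ⁻¹ * σ).exists_le_apply_le n
  calc c (τ n) ≤ c (τ ((τ⁻¹ * σ) i)) := hτ hin
    _ = c (σ i) := by simp
    _ ≤ _ := Finset.le_sup' (fun i => c (σ i)) (Finset.mem_Ici.mpr hni)

theorem Real.logb_one_add_div_le_of_le {b x d d' : ℝ} (hb : 1 < b) (hx : 0 ≤ x) (hd : 0 < d)
    (hdd' : d ≤ d') : Real.logb b (1 + x / d') ≤ Real.logb b (1 + x / d) := by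
  have hpos : 0 < 1 + x / d' :=
    add_pos_of_pos_of_nonneg one_pos (div_nonneg hx (hd.le.trans hdd'))
  exact Real.logb_le_logb_of_le hb hpos (by gcongr)

theorem optimal_sic_decoding_order_general (N : ℕ) (a : ℝ) (ha : 0 < a)
    (p c : Fin N → ℝ) (hp : ∀ n, 0 ≤ p n) (hc : ∀ n, 0 < c n)
    (σ τ : Equiv.Perm (Fin N)) (hτ : Antitone (c ∘ ⇑τ)) (n : Fin N) :
    sicRate a p c σ n ≤ sicRate a p c τ n ∧
      sicRate a p c τ n =
        Real.logb 2 (1 + a * p n / (a * ∑ j ∈ Finset.Ioi n, p j + c (τ n))) := by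
  have hmax : (Finset.Ici n).sup' ⟨n, Finset.mem_Ici.mpr le_rfl⟩ (fun i => c (τ i)) = c (τ n) :=
    hτ.sup'_Ici_eq n _
  have hsum : 0 ≤ a * ∑ j ∈ Finset.Ioi n, p j :=
    mul_nonneg ha.le (Finset.sum_nonneg fun j _ => hp j)
  unfold sicRate
  rw [hmax]
  refine ⟨Real.logb_one_add_div_le_of_le one_lt_two (mul_nonneg ha.le (hp n))
    (by linarith [hc (τ n)]) ?_, rfl⟩
  linarith [apply_le_sup'_Ici_of_antitone_comp σ τ hτ n]

/-- Proposition 1: the decoding order `τ` sorted so that `c ∘ τ`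
is antitone maximizes the rate at every position, and under `τ` the max term
reduces to `c (τ n)`. -/
theorem optimal_sic_decoding_order (N : ℕ) (hN : 1 ≤ N) (a : ℝ) (ha : 0 < a)
    (p c : Fin N → ℝ) (hp : ∀ n, 0 ≤ p n) (hc : ∀ n, 0 < c n)
    (σ τ : Equiv.Perm (Fin N)) (hτ : Antitone (c ∘ ⇑τ)) (n : Fin N) :
    sicRate a p c σ n ≤ sicRate a p c τ n ∧
      sicRate a p c τ n =
        Real.logb 2 (1 + a * p n / (a * ∑ j ∈ Finset.Ioi n, p j + c (τ n))) :=
  optimal_sic_decoding_order_general N a ha p c hp hc σ τ hτ n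
end

section
/- Let N ≥ 1, let a > 0, and let c : Fin N → ℝ be antitone with c(n) > 0 for all n. Define f(p) = ∑_{n} log₂(1 + a·p(n)/(a·∑_{j>n} p(j) + c(n))) for p : Fin N → ℝ. Then f is strictly monotone on the nonnegative orthant: if 0 ≤ p(n) ≤ q(n) for all n and p ≠ q, then f(p) < f(q). -/
/-!
Writing `S n = ∑_{j ≥ n} p j`, the rate of user `n` is `log (a S n + c n) - log (a S (n+1) + c n)`,
so the sum rate telescopes up to the mismatch between the noise levels `c n` and `c (n+1)` at which
each partial sum `S (n+1)` is evaluated. Passing from `p` to `q`, the gain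
`log (a S_q + c) - log (a S_p + c)` shrinks as `c` grows, so by antitonicity of `c` each negative
gain is dominated by the positive gain of the next user, while the first user's gain is strict
because `S 0` is the total power.
-/

open Finset Real

lemma logb_add_sub_logb_add_le_of_le {b x y c c' : ℝ} (hb : 1 < b) (hxy : x ≤ y) (hc : c' ≤ c)
    (hx : 0 < x + c') :
    logb b (y + c) - logb b (x + c) ≤ logb b (y + c') - logb b (x + c') := by
  have hcross : (y + c) * (x + c') ≤ (y + c') * (x + c) := by nlinarith
  have hlog := (logb_le_logb hb (by nlinarith) (by nlinarith)).2 hcross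
  rw [logb_mul (by linarith) (by linarith), logb_mul (by linarith) (by linarith)] at hlog
  linarith

lemma logb_one_add_div {b x y : ℝ} (hy : y ≠ 0) (hxy : x + y ≠ 0) :
    logb b (1 + x / y) = logb b (x + y) - logb b y := by
  rw [← logb_div hxy hy, add_div, div_self hy, add_comm]

lemma Fin.Ioi_castSucc {M : ℕ} (i : Fin M) : Ioi i.castSucc = Ici i.succ := by
  ext j
  simp [Fin.castSucc_lt_iff_succ_le]

lemma Fin.sum_lt_sum_of_le_succ {α : Type*} [AddCommMonoid α] [PartialOrder α]
    [IsOrderedCancelAddMonoid α] {M : ℕ} {x y : Fin (M + 1) → α} (hlast : x (Fin.last M) = 0)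
    (hle : ∀ i : Fin M, x i.castSucc ≤ y i.succ) (h0 : 0 < y 0) :
    ∑ i, x i < ∑ i, y i :=
  calc ∑ i, x i = ∑ i : Fin M, x i.castSucc := by rw [Fin.sum_univ_castSucc, hlast, add_zero]
    _ ≤ ∑ i : Fin M, y i.succ := sum_le_sum fun i _ ↦ hle i
    _ < y 0 + ∑ i : Fin M, y i.succ := lt_add_of_pos_left _ h0
    _ = ∑ i, y i := (Fin.sum_univ_succ y).symm

lemma sum_logb_one_add_div_tail {ι : Type*} [Fintype ι] [PartialOrder ι] [LocallyFiniteOrderTop ι]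
    {b a : ℝ} (ha : 0 ≤ a) {c r : ι → ℝ} (hc : ∀ n, 0 < c n) (hr : ∀ n, 0 ≤ r n) :
    ∑ n, logb b (1 + a * r n / (a * ∑ j ∈ Ioi n, r j + c n)) =
      ∑ n, (logb b (a * ∑ j ∈ Ici n, r j + c n) - logb b (a * ∑ j ∈ Ioi n, r j + c n)) := by
  refine sum_congr rfl fun n _ ↦ ?_
  have htail : 0 ≤ ∑ j ∈ Ioi n, r j := sum_nonneg fun j _ ↦ hr j
  have hrn := hr n
  have hcn := hc n
  rw [logb_one_add_div (by positivity) (by positivity), ← add_sum_Ioi_eq_sum_Ici]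
  ring_nf

/-- the sum rate is strictly increasing in the power allocation
coefficients on the nonnegative orthant. -/
theorem sum_rate_strictMono (N : ℕ) (hN : 1 ≤ N) (a : ℝ) (ha : 0 < a)
    (c : Fin N → ℝ) (hc_anti : Antitone c) (hc : ∀ n, 0 < c n)
    (p q : Fin N → ℝ) (hp : ∀ n, 0 ≤ p n) (hpq : ∀ n, p n ≤ q n) (hne : p ≠ q) :
    (∑ n, Real.logb 2 (1 + a * p n / (a * ∑ j ∈ Finset.Ioi n, p j + c n))) <
      ∑ n, Real.logb 2 (1 + a * q n / (a * ∑ j ∈ Finset.Ioi n, q j + c n)) := by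
  obtain ⟨M, rfl⟩ := Nat.exists_eq_add_of_le' hN
  have hq n : 0 ≤ q n := (hp n).trans (hpq n)
  have hpos (s : Finset (Fin (M + 1))) (n) : 0 < a * ∑ j ∈ s, p j + c n :=
    add_pos_of_nonneg_of_pos (mul_nonneg ha.le (sum_nonneg fun j _ ↦ hp j)) (hc n)
  obtain ⟨m, hm⟩ := (Pi.lt_def.1 (lt_of_le_of_ne hpq hne)).2
  have htotal : ∑ j ∈ Ici 0, p j < ∑ j ∈ Ici 0, q j :=
    sum_lt_sum (fun j _ ↦ hpq j) ⟨m, by simp, hm⟩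
  have hgain : ∑ n, (logb 2 (a * ∑ j ∈ Ioi n, q j + c n) - logb 2 (a * ∑ j ∈ Ioi n, p j + c n)) <
      ∑ n, (logb 2 (a * ∑ j ∈ Ici n, q j + c n) - logb 2 (a * ∑ j ∈ Ici n, p j + c n)) := by
    refine Fin.sum_lt_sum_of_le_succ (by simp [← Fin.top_eq_last]) (fun i ↦ ?_) ?_
    · rw [Fin.Ioi_castSucc]
      exact logb_add_sub_logb_add_le_of_le one_lt_two
        (mul_le_mul_of_nonneg_left (sum_le_sum fun j _ ↦ hpq j) ha.le)
        (hc_anti (Fin.castSucc_le_succ i)) (hpos _ _)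
    · exact sub_pos.2 (logb_lt_logb one_lt_two (hpos _ _)
        (add_lt_add_left (mul_lt_mul_of_pos_left htotal ha) _))
  rw [sum_logb_one_add_div_tail ha.le hc hp, sum_logb_one_add_div_tail ha.le hc hq]
  simp only [sum_sub_distrib] at hgain ⊢
  linarith
end

section
/- Let N ≥ 1, let a > 0, and let c : Fin N → ℝ be antitone with c(n) > 0 for all n. Define f(p) = ∑_{n} log₂(1 + a·p(n)/(a·∑_{j>n} p(j) + c(n))) and the feasible set S = {p : Fin N → ℝ | (∀ n, 0 ≤ p(n)) ∧ ∑_n p(n) ≤ 1}. If p* ∈ S satisfies f(p) ≤ f(p*) for all p ∈ S, then ∑_n p*(n) = 1. -/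
/-!
If the budget is not exhausted, give the spare power to the user decoded first. That user's
power appears in no other user's interference term, since those only sum over users decoded
later, so every other rate is unchanged while the first user's rate strictly grows,
contradicting optimality.
-/

open Finset

section SumRate

variable {ι : Type*} [Preorder ι] [LocallyFiniteOrderTop ι]

noncomputable def sicSumRate [Fintype ι] (a : ℝ) (c p : ι → ℝ) : ℝ :=
  ∑ n, Real.logb 2 (1 + a * p n / (a * ∑ j ∈ Ioi n, p j + c n))

lemma logb_one_add_mul_div_lt {a I x y : ℝ} (ha : 0 < a) (hI : 0 < I) (hx : 0 ≤ x)
    (hxy : x < y) : Real.logb 2 (1 + a * x / I) < Real.logb 2 (1 + a * y / I) := by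
  have hx' : 0 ≤ a * x / I := by positivity
  refine Real.logb_lt_logb one_lt_two (by linarith) ?_
  gcongr

lemma sum_Ioi_add_single_of_isMin [DecidableEq ι] {i : ι} (hi : IsMin i) (p : ι → ℝ)
    (δ : ℝ) (n : ι) :
    ∑ j ∈ Ioi n, (p + Pi.single i δ : ι → ℝ) j = ∑ j ∈ Ioi n, p j := by
  refine sum_congr rfl fun j hj => ?_
  have hji : j ≠ i := by
    rintro rfl
    exact hi.not_lt (mem_Ioi.mp hj)
  simp [hji]

lemma sicSumRate_lt_add_single_of_isMin [Fintype ι] [DecidableEq ι] {a : ℝ} (ha : 0 < a)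
    {c p : ι → ℝ} (hp : 0 ≤ p) {i : ι} (hi : IsMin i) (hci : 0 < c i) {δ : ℝ}
    (hδ : 0 < δ) :
    sicSumRate a c p < sicSumRate a c (p + Pi.single i δ) := by
  have hI : 0 < a * ∑ j ∈ Ioi i, p j + c i := by
    have := sum_nonneg fun j (_ : j ∈ Ioi i) => hp j
    positivity
  have hgain := logb_one_add_mul_div_lt ha hI (hp i) (lt_add_of_pos_right (p i) hδ)
  unfold sicSumRate
  simp_rw [sum_Ioi_add_single_of_isMin hi]
  refine sum_lt_sum (fun n _ => ?_) ⟨i, mem_univ i, by simpa using hgain⟩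
  by_cases hn : n = i
  · subst hn
    simpa using hgain.le
  · simp [hn]

end SumRate

theorem power_constraint_tight_at_optimum_general (N : ℕ) (hN : 1 ≤ N) (a : ℝ)
    (ha : 0 < a) (c : Fin N → ℝ) (hc : ∀ n, 0 < c n)
    (pstar : Fin N → ℝ)
    (hstar : (∀ n, 0 ≤ pstar n) ∧ ∑ n, pstar n ≤ 1)
    (hopt : ∀ p : Fin N → ℝ, ((∀ n, 0 ≤ p n) ∧ ∑ n, p n ≤ 1) →
      (∑ n, Real.logb 2 (1 + a * p n / (a * ∑ j ∈ Finset.Ioi n, p j + c n))) ≤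
        ∑ n, Real.logb 2
          (1 + a * pstar n / (a * ∑ j ∈ Finset.Ioi n, pstar j + c n))) :
    ∑ n, pstar n = 1 := by
  by_contra hne
  set δ := 1 - ∑ n, pstar n
  have hδ : 0 < δ := sub_pos.mpr (lt_of_le_of_ne hstar.2 hne)
  let first : Fin N := ⟨0, hN⟩
  have hfirst : IsMin first := fun n _ => Fin.le_def.mpr (Nat.zero_le _)
  set p := pstar + Pi.single first δ
  have hp_nonneg : 0 ≤ p := add_nonneg hstar.1 (Pi.single_nonneg.mpr hδ.le)
  have hp_sum : ∑ n, p n = 1 := by simp [p, sum_add_distrib, δ]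
  exact (hopt p ⟨hp_nonneg, hp_sum.le⟩).not_gt
    (sicSumRate_lt_add_single_of_isMin ha hstar.1 hfirst (hc first) hδ)

/-- at any maximizer of the sum rate over the simplex-constrained
feasible set, the total-power constraint is tight. -/
theorem power_constraint_tight_at_optimum (N : ℕ) (hN : 1 ≤ N) (a : ℝ)
    (ha : 0 < a) (c : Fin N → ℝ) (hc_anti : Antitone c) (hc : ∀ n, 0 < c n)
    (pstar : Fin N → ℝ)
    (hstar : (∀ n, 0 ≤ pstar n) ∧ ∑ n, pstar n ≤ 1)
    (hopt : ∀ p : Fin N → ℝ, ((∀ n, 0 ≤ p n) ∧ ∑ n, p n ≤ 1) →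
      (∑ n, Real.logb 2 (1 + a * p n / (a * ∑ j ∈ Finset.Ioi n, p j + c n))) ≤
        ∑ n, Real.logb 2
          (1 + a * pstar n / (a * ∑ j ∈ Finset.Ioi n, pstar j + c n))) :
    ∑ n, pstar n = 1 :=
  power_constraint_tight_at_optimum_general N hN a ha c hc pstar hstar hopt
end

section
/- Let N ≥ 1 and let v : Fin N → ℝ satisfy v(i) > 0 for all i and ∑_i v(i) ≥ 1, and set z = (∑_i v(i))⁻¹ • v. Then for every x : Fin N → ℝ with 0 ≤ x(i) ≤ v(i) for all i and ∑_i x(i) ≤ 1, there exists an index i such that x(j) ≤ (Function.update v i (z i))(j) for all j. -/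
open Finset

theorem exists_le_inv_sum_smul {ι : Type*} [Fintype ι] {x v : ι → ℝ}
    (hv : ∑ i, v i ≠ 0) (hx : ∑ i, x i ≤ 1) : ∃ i, x i ≤ ((∑ i, v i)⁻¹ • v) i := by
  have hsum_one : ∑ i, ((∑ i, v i)⁻¹ • v) i = 1 := by
    simp only [Pi.smul_apply, smul_eq_mul, ← mul_sum, inv_mul_cancel₀ hv]
  obtain ⟨i, -, hi⟩ := exists_le_of_sum_le (nonempty_of_sum_ne_zero hv) (hx.trans hsum_one.ge)
  exact ⟨i, hi⟩

theorem new_polyblock_contains_feasible_set_general (N : ℕ)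
    (v : Fin N → ℝ) (hsum : 1 ≤ ∑ i, v i)
    (x : Fin N → ℝ) (hx : ∀ i, 0 ≤ x i ∧ x i ≤ v i) (hxsum : ∑ i, x i ≤ 1) :
    ∃ i, ∀ j, x j ≤ Function.update v i ((((∑ i, v i)⁻¹ • v)) i) j := by
  obtain ⟨i, hi⟩ := exists_le_inv_sum_smul (zero_lt_one.trans_le hsum).ne' hxsum
  exact ⟨i, le_update_iff.2 ⟨hi, fun j _ => (hx j).2⟩⟩

/-- after projecting the vertex `v` onto the boundary point
`z = (∑ i, v i)⁻¹ • v`, every feasible point in the box `[0, v]` lies in one of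
the new boxes `[0, Function.update v i (z i)]`. -/
theorem new_polyblock_contains_feasible_set (N : ℕ) (hN : 1 ≤ N)
    (v : Fin N → ℝ) (hv : ∀ i, 0 < v i) (hsum : 1 ≤ ∑ i, v i)
    (x : Fin N → ℝ) (hx : ∀ i, 0 ≤ x i ∧ x i ≤ v i) (hxsum : ∑ i, x i ≤ 1) :
    ∃ i, ∀ j, x j ≤ Function.update v i ((((∑ i, v i)⁻¹ • v)) i) j :=
  new_polyblock_contains_feasible_set_general N v hsum x hx hxsum
end
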